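/- arXiv:2410.20741 — 3 statements merged into one kernel-verified Lean document; each statement's English description precedes it below -/
import Mathlib

section
/- The set of uniformly P-ergodic Markov semigroups is open in the set Ξ_P^{inv}(X) of Markov C₀-semigroups commuting with P and fixing P, with respect to the metric ρ_1(T,S) = sup_{t∈[0,1]} ‖T_t − S_t‖. Concretely: if (T_t) is uniformly P-ergodic with δ_P(T_{t₀}) = 1 − ε for some t₀ > 0 and ε ∈ (0,1), and N ∈ ℕ satisfies t₀/N < 1, then any (R_t) ∈ Ξ_P^{inv}(X) with ρ_1(R,T) < ε/(2N) satisfies δ_P(R_{t₀}) ≤ 1 − ε/2 < 1, hence is uniformly P-ergodic. -/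
lemma contraction_pow_norm_le {X : Type*} [NormedAddCommGroup X] [NormedSpace ℝ X]
    (A : X →L[ℝ] X) (hA : ‖A‖ ≤ 1) (n : ℕ) : ‖A ^ n‖ ≤ 1 := by
  cases n with
  | zero => simpa [ContinuousLinearMap.one_def] using ContinuousLinearMap.norm_id_le (𝕜 := ℝ) (E := X)
  | succ m => exact le_trans (norm_pow_le' A m.succ_pos) (pow_le_one₀ (norm_nonneg A) hA)

lemma pow_sub_pow_norm_le {X : Type*} [NormedAddCommGroup X] [NormedSpace ℝ X]
    (A B : X →L[ℝ] X) (hA : ‖A‖ ≤ 1) (hB : ‖B‖ ≤ 1) (n : ℕ) :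
    ‖A ^ n - B ^ n‖ ≤ n * ‖A - B‖ := by
  induction n with
  | zero => simp
  | succ n ih =>
    have hAn : ‖A ^ n‖ ≤ 1 := contraction_pow_norm_le A hA n
    have hsplit : A ^ (n+1) - B ^ (n+1) = A ^ n * (A - B) + (A ^ n - B ^ n) * B := by
      rw [pow_succ, pow_succ]; noncomm_ring
    calc ‖A ^ (n+1) - B ^ (n+1)‖ = ‖A ^ n * (A - B) + (A ^ n - B ^ n) * B‖ := by rw [hsplit]
      _ ≤ ‖A ^ n * (A - B)‖ + ‖(A ^ n - B ^ n) * B‖ := norm_add_le _ _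
      _ ≤ ‖A ^ n‖ * ‖A - B‖ + ‖A ^ n - B ^ n‖ * ‖B‖ :=
          add_le_add (norm_mul_le _ _) (norm_mul_le _ _)
      _ ≤ 1 * ‖A - B‖ + (n * ‖A - B‖) * 1 := by
          have h1 := norm_nonneg (A - B)
          have h2 := norm_nonneg (A ^ n - B ^ n)
          nlinarith
      _ = (n + 1 : ℕ) * ‖A - B‖ := by push_cast; ring

/-- The generalized Dobrushin ergodicity coefficient of `T` with respect to
the projection `P`. -/
noncomputable def deltaP {X : Type*} [NormedAddCommGroup X] [NormedSpace ℝ X]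
    (P T : X →L[ℝ] X) : ℝ :=
  ⨆ x : {x : X // P x = 0 ∧ x ≠ 0}, ‖T (x : X)‖ / ‖(x : X)‖

/-- Openness of the set of uniformly P-ergodic semigroups in `Ξ_P^{inv}(X)`
with respect to `ρ₁`: the concrete quantitative statement. -/
theorem stmt11 {X : Type*} [NormedAddCommGroup X] [NormedSpace ℝ X] [CompleteSpace X]
    (T R : ℝ → X →L[ℝ] X) (P : X →L[ℝ] X)
    (hT0 : T 0 = 1) (hR0 : R 0 = 1)
    (hTsemi : ∀ s t : ℝ, 0 ≤ s → 0 ≤ t → T (s + t) = (T s).comp (T t))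
    (hRsemi : ∀ s t : ℝ, 0 ≤ s → 0 ≤ t → R (s + t) = (R s).comp (R t))
    (hTnorm : ∀ t : ℝ, 0 ≤ t → ‖T t‖ ≤ 1)
    (hRnorm : ∀ t : ℝ, 0 ≤ t → ‖R t‖ ≤ 1)
    (hP : P.comp P = P)
    (hTfix : ∀ t : ℝ, 0 ≤ t → (T t).comp P = P ∧ P.comp (T t) = P)
    (hRfix : ∀ t : ℝ, 0 ≤ t → (R t).comp P = P ∧ P.comp (R t) = P)
    (t₀ : ℝ) (ht₀ : 0 < t₀) (ε : ℝ) (hε : ε ∈ Set.Ioo (0 : ℝ) 1)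
    (hdelta : deltaP P (T t₀) = 1 - ε)
    (N : ℕ) (hN : 0 < N) (htN : t₀ / N < 1)
    (hclose : ∀ t ∈ Set.Icc (0 : ℝ) 1, ‖R t - T t‖ < ε / (2 * N)) :
    deltaP P (R t₀) ≤ 1 - ε / 2 ∧ deltaP P (R t₀) < 1 := by
  obtain ⟨hε0, hε1⟩ := hε
  have hNR : (0 : ℝ) < N := Nat.cast_pos.mpr hN
  set s := t₀ / N with hs
  have hs0 : 0 ≤ s := le_of_lt (div_pos ht₀ hNR)
  have hs1 : s ≤ 1 := le_of_lt htN
  -- semigroup powers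
  have hpow : ∀ (S : ℝ → X →L[ℝ] X), S 0 = 1 →
      (∀ a b : ℝ, 0 ≤ a → 0 ≤ b → S (a + b) = (S a).comp (S b)) →
      ∀ n : ℕ, S (n * s) = (S s) ^ n := by
    intro S hS0 hSsemi n
    induction n with
    | zero => simpa using hS0
    | succ n ih =>
      have : ((n + 1 : ℕ) : ℝ) * s = s + n * s := by push_cast; ring
      rw [this, hSsemi s (n * s) hs0 (by positivity), ih, pow_succ']
      rfl
  have ht0Ns : t₀ = (N : ℝ) * s := by rw [hs, mul_div_assoc', eq_div_iff (ne_of_gt hNR), mul_comm]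
  have hRt : R t₀ = (R s) ^ N := by rw [ht0Ns]; exact hpow R hR0 hRsemi N
  have hTt : T t₀ = (T s) ^ N := by rw [ht0Ns]; exact hpow T hT0 hTsemi N
  -- the key norm estimate
  have hcl : ‖R s - T s‖ < ε / (2 * N) := hclose s ⟨hs0, hs1⟩
  have hRT : ‖R t₀ - T t₀‖ < ε / 2 := by
    have h1 : ‖R t₀ - T t₀‖ ≤ N * ‖R s - T s‖ := by
      rw [hRt, hTt]
      exact pow_sub_pow_norm_le _ _ (hRnorm s hs0) (hTnorm s hs0) N
    have h2 : (N : ℝ) * ‖R s - T s‖ < N * (ε / (2 * N)) :=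
      (mul_lt_mul_iff_right₀ hNR).mpr hcl
    have h3 : (N : ℝ) * (ε / (2 * N)) = ε / 2 := by field_simp
    linarith
  -- per-point bound on deltaP of T
  have ht₀0 : (0 : ℝ) ≤ t₀ := le_of_lt ht₀
  have hbdd : BddAbove (Set.range fun x : {x : X // P x = 0 ∧ x ≠ 0} =>
      ‖T t₀ (x : X)‖ / ‖(x : X)‖) := by
    refine ⟨1, ?_⟩
    rintro _ ⟨x, rfl⟩
    have hx : (0 : ℝ) < ‖(x : X)‖ := norm_pos_iff.mpr x.2.2
    rw [div_le_one hx]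
    calc ‖T t₀ (x : X)‖ ≤ ‖T t₀‖ * ‖(x : X)‖ := (T t₀).le_opNorm _
      _ ≤ 1 * ‖(x : X)‖ := by gcongr; exact hTnorm t₀ ht₀0
      _ = ‖(x : X)‖ := one_mul _
  have hTle : ∀ x : {x : X // P x = 0 ∧ x ≠ 0},
      ‖T t₀ (x : X)‖ / ‖(x : X)‖ ≤ 1 - ε := by
    intro x
    rw [← hdelta]
    exact le_ciSup hbdd x
  have hkey : deltaP P (R t₀) ≤ 1 - ε / 2 := by
    apply Real.iSup_le _ (by linarith)
    intro x
    have hx : (0 : ℝ) < ‖(x : X)‖ := norm_pos_iff.mpr x.2.2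
    have h1 : ‖R t₀ (x : X)‖ ≤ ‖T t₀ (x : X)‖ + ‖R t₀ - T t₀‖ * ‖(x : X)‖ := by
      have : ‖R t₀ (x : X)‖ ≤ ‖T t₀ (x : X)‖ + ‖(R t₀ - T t₀) (x : X)‖ := by
        have := norm_add_le (T t₀ (x : X)) ((R t₀ - T t₀) (x : X))
        simpa using this
      exact le_trans this (by gcongr; exact (R t₀ - T t₀).le_opNorm _)
    have h2 : ‖R t₀ (x : X)‖ / ‖(x : X)‖ ≤
        ‖T t₀ (x : X)‖ / ‖(x : X)‖ + ‖R t₀ - T t₀‖ := by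
      rw [div_add' _ _ _ (ne_of_gt hx)]
      gcongr
    have := hTle x
    linarith
  exact ⟨hkey, lt_of_le_of_lt hkey (by linarith)⟩
end

section
/- Let (T_t) be a Markov C₀-semigroup on an abstract state space, Q a Markov projection with A_t Q = Q A_t for all t (where A_t is the Cesàro average), and suppose there exists t₀ > 0 with ρ := δ_Q(A_{t₀}) < 1. Then δ_Q(A_t) ≤ t₀ / (t(1 − ρ)) for all t > 0; in particular δ_Q(A_t) → 0 as t → ∞. -/
open MeasureTheory intervalIntegral

/-- If the Cesàro averages commute with the Markov projection `Q` and
`ρ = δ_Q(A_{t₀}) < 1` for some `t₀ > 0`, then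
`δ_Q(A_t) ≤ t₀/(t(1−ρ))`, so `δ_Q(A_t) → 0`. -/
theorem stmt16 {X : Type*} [NormedAddCommGroup X] [NormedSpace ℝ X] [CompleteSpace X]
    (T : ℝ → X →L[ℝ] X)
    (hT0 : T 0 = 1)
    (hTsemi : ∀ s t : ℝ, 0 ≤ s → 0 ≤ t → T (s + t) = (T s).comp (T t))
    (hTcont : ∀ x : X, ContinuousOn (fun s => T s x) (Set.Ici (0 : ℝ)))
    (hTnorm : ∀ t : ℝ, 0 ≤ t → ‖T t‖ ≤ 1)
    (A : ℝ → X →L[ℝ] X)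
    (hA : ∀ t : ℝ, 0 < t → ∀ x : X, A t x = (1 / t) • ∫ s in (0 : ℝ)..t, T s x)
    (Q : X →L[ℝ] X) (hQ : Q.comp Q = Q)
    (hAQ : ∀ t : ℝ, 0 < t → (A t).comp Q = Q.comp (A t))
    (t₀ : ℝ) (ht₀ : 0 < t₀) (hrho : deltaP Q (A t₀) < 1) :
    (∀ t : ℝ, 0 < t → deltaP Q (A t) ≤ t₀ / (t * (1 - deltaP Q (A t₀)))) ∧
      Filter.Tendsto (fun t : ℝ => deltaP Q (A t)) Filter.atTop (nhds 0) := by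
  -- pointwise contraction of the semigroup
  have hTn : ∀ s : ℝ, 0 ≤ s → ∀ x : X, ‖T s x‖ ≤ ‖x‖ := by
    intro s hs x
    calc ‖T s x‖ ≤ ‖T s‖ * ‖x‖ := (T s).le_opNorm x
      _ ≤ 1 * ‖x‖ := mul_le_mul_of_nonneg_right (hTnorm s hs) (norm_nonneg x)
      _ = ‖x‖ := one_mul _
  -- interval integrability
  have hint : ∀ (x : X) (a b : ℝ), 0 ≤ a → 0 ≤ b →
      IntervalIntegrable (fun s => T s x) volume a b := by
    intro x a b ha hb
    apply ContinuousOn.intervalIntegrable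
    apply (hTcont x).mono
    intro y hy
    exact le_trans (le_min ha hb) hy.1
  -- integral norm bound
  have hIb : ∀ (x : X) (a b : ℝ), 0 ≤ a → a ≤ b → ‖∫ s in a..b, T s x‖ ≤ (b - a) * ‖x‖ := by
    intro x a b ha hab
    have h := intervalIntegral.norm_integral_le_of_norm_le_const (C := ‖x‖)
      (f := fun s => T s x) (a := a) (b := b) ?_
    · rwa [abs_of_nonneg (sub_nonneg.2 hab), mul_comm] at h
    · intro s hs
      rw [Set.uIoc_of_le hab] at hs
      exact hTn s (le_trans ha hs.1.le) x
  -- A t is a contraction pointwise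
  have hAc : ∀ t : ℝ, 0 < t → ∀ x : X, ‖A t x‖ ≤ ‖x‖ := by
    intro t ht x
    rw [hA t ht x, norm_smul, Real.norm_eq_abs, abs_of_pos (by positivity : (0:ℝ) < 1/t)]
    calc 1 / t * ‖∫ s in (0:ℝ)..t, T s x‖ ≤ 1 / t * ((t - 0) * ‖x‖) :=
          mul_le_mul_of_nonneg_left (hIb x 0 t le_rfl ht.le) (by positivity)
      _ = ‖x‖ := by field_simp; ring
  -- key estimate : ‖A t x - A t (A t₀ x)‖ ≤ (t₀/t) * ‖x‖
  have key : ∀ t : ℝ, 0 < t → ∀ x : X, ‖A t x - A t (A t₀ x)‖ ≤ t₀ / t * ‖x‖ := by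
    intro t ht x
    have hATu : ∀ u : ℝ, 0 ≤ u →
        A t (T u x) = (1 / t) • ∫ v in u..(t + u), T v x := by
      intro u hu
      rw [hA t ht (T u x)]
      congr 1
      have h1 : (∫ s in (0:ℝ)..t, T s (T u x)) = ∫ s in (0:ℝ)..t, T (s + u) x := by
        apply intervalIntegral.integral_congr
        intro s hs
        rw [Set.uIcc_of_le ht.le] at hs
        show (T s) ((T u) x) = (T (s + u)) x
        rw [hTsemi s u hs.1 hu]; rfl
      rw [h1]
      have h2 := intervalIntegral.integral_comp_add_right (a := (0:ℝ)) (b := t)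
        (fun v => T v x) u
      rw [h2, zero_add]
    have hg : ∀ u : ℝ, 0 ≤ u → ‖A t x - A t (T u x)‖ ≤ 2 * u * ‖x‖ / t := by
      intro u hu
      rw [hA t ht x, hATu u hu, ← smul_sub, norm_smul, Real.norm_eq_abs,
        abs_of_pos (by positivity : (0:ℝ) < 1/t)]
      have hsplit : ((∫ s in (0:ℝ)..t, T s x) - ∫ v in u..(t + u), T v x)
          = (∫ s in (0:ℝ)..u, T s x) - ∫ v in t..(t + u), T v x := by
        have e1 : ((∫ s in (0:ℝ)..u, T s x) + ∫ s in u..t, T s x) = ∫ s in (0:ℝ)..t, T s x :=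
          intervalIntegral.integral_add_adjacent_intervals (hint x 0 u le_rfl hu)
            (hint x u t hu ht.le)
        have e2 : ((∫ s in u..t, T s x) + ∫ s in t..(t + u), T s x) = ∫ s in u..(t + u), T s x :=
          intervalIntegral.integral_add_adjacent_intervals (hint x u t hu ht.le)
            (hint x t (t + u) ht.le (by linarith))
        rw [← e1, ← e2]; abel
      rw [hsplit]
      have b1 : ‖∫ s in (0:ℝ)..u, T s x‖ ≤ u * ‖x‖ := by
        have := hIb x 0 u le_rfl hu
        simpa using this
      have b2 : ‖∫ v in t..(t + u), T v x‖ ≤ u * ‖x‖ := by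
        have := hIb x t (t + u) ht.le (by linarith)
        simpa using this
      calc 1 / t * ‖(∫ s in (0:ℝ)..u, T s x) - ∫ v in t..(t + u), T v x‖
          ≤ 1 / t * (u * ‖x‖ + u * ‖x‖) := by
            apply mul_le_mul_of_nonneg_left _ (by positivity)
            exact le_trans (norm_sub_le _ _) (add_le_add b1 b2)
        _ = 2 * u * ‖x‖ / t := by ring
    -- integrability of u ↦ A t (T u x)
    have hintA : IntervalIntegrable (fun u => A t (T u x)) volume 0 t₀ := by
      apply ContinuousOn.intervalIntegrable
      apply ((A t).continuous.comp_continuousOn (hTcont x)).mono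
      intro y hy
      exact le_trans (le_min le_rfl ht₀.le) hy.1
    have hAcomp : A t (A t₀ x) = (1 / t₀) • ∫ u in (0:ℝ)..t₀, A t (T u x) := by
      rw [hA t₀ ht₀ x, (A t).map_smul]
      congr 1
      exact ((A t).intervalIntegral_comp_comm (hint x 0 t₀ le_rfl ht₀.le)).symm
    have hconst : A t x = (1 / t₀) • ∫ _u in (0:ℝ)..t₀, A t x := by
      rw [intervalIntegral.integral_const, sub_zero, smul_smul, one_div,
        inv_mul_cancel₀ ht₀.ne', one_smul]
    calc ‖A t x - A t (A t₀ x)‖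
        = ‖(1 / t₀) • ∫ u in (0:ℝ)..t₀, (A t x - A t (T u x))‖ := by
          rw [intervalIntegral.integral_sub intervalIntegrable_const hintA, smul_sub,
            ← hconst, ← hAcomp]
      _ ≤ 1 / t₀ * ∫ u in (0:ℝ)..t₀, 2 * u * ‖x‖ / t := by
          rw [norm_smul, Real.norm_eq_abs, abs_of_pos (by positivity : (0:ℝ) < 1/t₀)]
          apply mul_le_mul_of_nonneg_left _ (by positivity)
          have hb : ∀ᵐ u ∂(volume.restrict (Set.uIoc (0:ℝ) t₀)),
              ‖A t x - A t (T u x)‖ ≤ 2 * u * ‖x‖ / t := by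
            filter_upwards [ae_restrict_mem measurableSet_uIoc] with u hu
            rw [Set.uIoc_of_le ht₀.le] at hu
            exact hg u hu.1.le
          have hgi : IntervalIntegrable (fun u => 2 * u * ‖x‖ / t) volume 0 t₀ := by
            exact (((continuous_const.mul continuous_id).mul
              continuous_const).div_const t).intervalIntegrable _ _
          have h := intervalIntegral.norm_integral_le_abs_of_norm_le hb hgi
          refine h.trans (le_of_eq (abs_of_nonneg ?_))
          apply intervalIntegral.integral_nonneg ht₀.le
          intro u hu
          exact div_nonneg (mul_nonneg (by linarith [hu.1]) (norm_nonneg x)) ht.le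
      _ = t₀ / t * ‖x‖ := by
          have : (∫ u in (0:ℝ)..t₀, 2 * u * ‖x‖ / t) = (∫ u in (0:ℝ)..t₀, u) * (2 * ‖x‖ / t) := by
            rw [← intervalIntegral.integral_mul_const]
            congr 1; funext u; ring
          rw [this, integral_id]
          field_simp
          ring
  -- δ machinery
  have hd_nonneg : ∀ S : X →L[ℝ] X, 0 ≤ deltaP Q S := by
    intro S
    exact Real.iSup_nonneg fun x => div_nonneg (norm_nonneg _) (norm_nonneg _)
  have hd_le : ∀ (S : X →L[ℝ] X) (C : ℝ), 0 ≤ C → (∀ x : X, Q x = 0 → ‖S x‖ ≤ C * ‖x‖) →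
      deltaP Q S ≤ C := by
    intro S C hC h
    apply Real.iSup_le _ hC
    rintro ⟨x, hx0, hxne⟩
    rw [div_le_iff₀ (norm_pos_iff.2 hxne)]
    exact h x hx0
  have hd_ge : ∀ (S : X →L[ℝ] X), (∀ x : X, ‖S x‖ ≤ ‖x‖) →
      ∀ x : X, Q x = 0 → ‖S x‖ ≤ deltaP Q S * ‖x‖ := by
    intro S hS x hx
    rcases eq_or_ne x 0 with rfl | hne
    · simp
    · have hb : BddAbove (Set.range fun y : {x : X // Q x = 0 ∧ x ≠ 0} =>
          ‖S (y : X)‖ / ‖(y : X)‖) := by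
        refine ⟨1, ?_⟩
        rintro r ⟨⟨y, hy0, hyne⟩, rfl⟩
        exact div_le_one_of_le₀ (hS y) (norm_nonneg y)
      have := le_ciSup hb (⟨x, hx, hne⟩ : {x : X // Q x = 0 ∧ x ≠ 0})
      rw [div_le_iff₀ (norm_pos_iff.2 hne)] at this
      exact this.trans (le_of_eq rfl)
  set ρ := deltaP Q (A t₀) with hρ
  have hρ0 : 0 ≤ ρ := hd_nonneg _
  have h1ρ : 0 < 1 - ρ := by linarith
  -- main bound
  have main : ∀ t : ℝ, 0 < t → deltaP Q (A t) ≤ t₀ / (t * (1 - ρ)) := by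
    intro t ht
    have hδ0 : 0 ≤ deltaP Q (A t) := hd_nonneg _
    have hstep : deltaP Q (A t) ≤ t₀ / t + deltaP Q (A t) * ρ := by
      apply hd_le _ _ (by positivity)
      intro x hx
      have hQA : Q (A t₀ x) = 0 := by
        have := congrArg (fun L : X →L[ℝ] X => L x) (hAQ t₀ ht₀)
        simp only [ContinuousLinearMap.comp_apply] at this
        rw [← this, hx, map_zero]
      have h2 : ‖A t (A t₀ x)‖ ≤ deltaP Q (A t) * ‖A t₀ x‖ :=
        hd_ge (A t) (hAc t ht) _ hQA
      have h3 : ‖A t₀ x‖ ≤ ρ * ‖x‖ := hd_ge (A t₀) (hAc t₀ ht₀) x hx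
      calc ‖A t x‖ = ‖(A t x - A t (A t₀ x)) + A t (A t₀ x)‖ := by rw [sub_add_cancel]
        _ ≤ ‖A t x - A t (A t₀ x)‖ + ‖A t (A t₀ x)‖ := norm_add_le _ _
        _ ≤ t₀ / t * ‖x‖ + deltaP Q (A t) * (ρ * ‖x‖) := by
            apply add_le_add (key t ht x)
            exact h2.trans (mul_le_mul_of_nonneg_left h3 hδ0)
        _ = (t₀ / t + deltaP Q (A t) * ρ) * ‖x‖ := by ring
    have : deltaP Q (A t) * (1 - ρ) ≤ t₀ / t := by nlinarith
    rw [show t₀ / (t * (1 - ρ)) = (t₀ / t) / (1 - ρ) by rw [div_div]]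
    rw [le_div_iff₀ h1ρ]
    exact this
  refine ⟨main, ?_⟩
  -- tendsto
  have hlim : Filter.Tendsto (fun t : ℝ => (t₀ / (1 - ρ)) / t) Filter.atTop (nhds 0) :=
    Filter.Tendsto.div_atTop tendsto_const_nhds Filter.tendsto_id
  apply squeeze_zero' (g := fun t : ℝ => (t₀ / (1 - ρ)) / t)
  · filter_upwards [Filter.eventually_gt_atTop 0] with t ht
    exact hd_nonneg _
  · filter_upwards [Filter.eventually_gt_atTop 0] with t ht
    have := main t ht
    rwa [show t₀ / (t * (1 - ρ)) = (t₀ / (1 - ρ)) / t by rw [div_div]; ring_nf] at this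
  · exact hlim
end

section
/- Let (T_t) be a Markov C₀-semigroup commuting with a Markov projection P, and A_t its Cesàro averages. If there exist t₀ > 0 and n₀ ∈ ℕ with δ_P(A_{t₀}^{n₀}) < 1, then δ_P(A_t) → 0 as t → ∞ (weak P-mean ergodicity); conversely, if δ_P(A_t) → 0 then such t₀, n₀ exist (indeed with n₀ = 1). -/
section aux

variable {X : Type*} [NormedAddCommGroup X] [NormedSpace ℝ X]

lemma deltaP_nonneg (P S : X →L[ℝ] X) : 0 ≤ deltaP P S :=
  Real.iSup_nonneg fun x => div_nonneg (norm_nonneg _) (norm_nonneg _)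

lemma deltaP_bddAbove (P S : X →L[ℝ] X) :
    BddAbove (Set.range fun x : {x : X // P x = 0 ∧ x ≠ 0} => ‖S (x : X)‖ / ‖(x : X)‖) := by
  refine ⟨‖S‖, ?_⟩
  rintro r ⟨⟨x, hx, hx0⟩, rfl⟩
  have hxpos : (0 : ℝ) < ‖x‖ := norm_pos_iff.2 hx0
  exact div_le_of_le_mul₀ hxpos.le (norm_nonneg _) (S.le_opNorm x)

lemma deltaP_le (P S : X →L[ℝ] X) {C : ℝ} (hC : 0 ≤ C)
    (h : ∀ x : X, P x = 0 → ‖S x‖ ≤ C * ‖x‖) : deltaP P S ≤ C := by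
  refine Real.iSup_le ?_ hC
  rintro ⟨x, hx, hx0⟩
  have hxpos : (0 : ℝ) < ‖x‖ := norm_pos_iff.2 hx0
  exact div_le_of_le_mul₀ hxpos.le hC (h x hx)

lemma deltaP_apply_le (P S : X →L[ℝ] X) (x : X) (hx : P x = 0) :
    ‖S x‖ ≤ deltaP P S * ‖x‖ := by
  rcases eq_or_ne x 0 with rfl | hx0
  · simp
  · have hxpos : (0 : ℝ) < ‖x‖ := norm_pos_iff.2 hx0
    have : ‖S x‖ / ‖x‖ ≤ deltaP P S :=
      le_ciSup (deltaP_bddAbove P S) (⟨x, hx, hx0⟩ : {x : X // P x = 0 ∧ x ≠ 0})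
    calc ‖S x‖ = ‖S x‖ / ‖x‖ * ‖x‖ := by field_simp
    _ ≤ deltaP P S * ‖x‖ := by gcongr

end aux

/-- Weak `P`-mean ergodicity `δ_P(A_t) → 0` holds iff `δ_P(A_{t₀}^{n₀}) < 1`
for some `t₀ > 0` and `n₀ ≥ 1`. -/
theorem stmt18 {X : Type*} [NormedAddCommGroup X] [NormedSpace ℝ X] [CompleteSpace X]
    (T : ℝ → X →L[ℝ] X)
    (hT0 : T 0 = 1)
    (hTsemi : ∀ s t : ℝ, 0 ≤ s → 0 ≤ t → T (s + t) = (T s).comp (T t))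
    (hTcont : ∀ x : X, ContinuousOn (fun s => T s x) (Set.Ici (0 : ℝ)))
    (hTnorm : ∀ t : ℝ, 0 ≤ t → ‖T t‖ ≤ 1)
    (A : ℝ → X →L[ℝ] X)
    (hA : ∀ t : ℝ, 0 < t → ∀ x : X, A t x = (1 / t) • ∫ s in (0 : ℝ)..t, T s x)
    (P : X →L[ℝ] X) (hP : P.comp P = P)
    (hcomm : ∀ t : ℝ, 0 ≤ t → (T t).comp P = P.comp (T t)) :
    (∃ t₀ : ℝ, 0 < t₀ ∧ ∃ n₀ : ℕ, 1 ≤ n₀ ∧ deltaP P ((A t₀) ^ n₀) < 1) ↔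
      Filter.Tendsto (fun t : ℝ => deltaP P (A t)) Filter.atTop (nhds 0) := by
  -- integrability of the orbit maps
  have hInt : ∀ (x : X) (a b : ℝ), 0 ≤ a → 0 ≤ b →
      IntervalIntegrable (fun s => T s x) MeasureTheory.volume a b := by
    intro x a b ha hb
    apply ContinuousOn.intervalIntegrable
    apply (hTcont x).mono
    intro y hy
    exact le_trans (le_min ha hb) hy.1
  -- pointwise norm bound on T
  have hTb : ∀ (x : X) (s : ℝ), 0 ≤ s → ‖T s x‖ ≤ ‖x‖ := by
    intro x s hs
    calc ‖T s x‖ ≤ ‖T s‖ * ‖x‖ := (T s).le_opNorm x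
    _ ≤ 1 * ‖x‖ := by gcongr; exact hTnorm s hs
    _ = ‖x‖ := one_mul _
  -- bound on segments of the integral
  have hIb : ∀ (x : X) (a b : ℝ), 0 ≤ a → 0 ≤ b →
      ‖∫ s in a..b, T s x‖ ≤ ‖x‖ * |b - a| := by
    intro x a b ha hb
    apply intervalIntegral.norm_integral_le_of_norm_le_const
    intro s hs
    exact hTb x s (le_of_lt (lt_of_le_of_lt (le_min ha hb) hs.1))
  -- A t is a contraction
  have hAb : ∀ t : ℝ, 0 < t → ∀ x : X, ‖A t x‖ ≤ ‖x‖ := by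
    intro t ht x
    rw [hA t ht x]
    rw [norm_smul]
    have h1 : ‖(1 : ℝ) / t‖ = 1 / t := by
      rw [Real.norm_eq_abs, abs_of_pos (by positivity)]
    rw [h1]
    calc 1 / t * ‖∫ s in (0:ℝ)..t, T s x‖ ≤ 1 / t * (‖x‖ * |t - 0|) := by
          gcongr; exact hIb x 0 t le_rfl ht.le
    _ = ‖x‖ := by rw [sub_zero, abs_of_pos ht]; field_simp
  -- P commutes with A t
  have hPA : ∀ t : ℝ, 0 < t → ∀ x : X, P (A t x) = A t (P x) := by
    intro t ht x
    rw [hA t ht x, hA t ht (P x), map_smul]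
    congr 1
    rw [← P.intervalIntegral_comp_comm (hInt x 0 t le_rfl ht.le)]
    apply intervalIntegral.integral_congr
    intro s hs
    have hs0 : 0 ≤ s := by
      rcases hs with ⟨h1, _⟩
      simpa [min_eq_left ht.le] using h1
    show P (T s x) = T s (P x)
    have := hcomm s hs0
    calc P (T s x) = (P.comp (T s)) x := rfl
    _ = ((T s).comp P) x := by rw [this]
    _ = T s (P x) := rfl
  -- P commutes with powers of A t
  have hPApow : ∀ t : ℝ, 0 < t → ∀ n : ℕ, ∀ x : X, P ((A t ^ n) x) = (A t ^ n) (P x) := by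
    intro t ht n
    induction n with
    | zero => intro x; simp
    | succ n ih =>
      intro x
      have hpow : ∀ y : X, (A t ^ (n + 1)) y = (A t ^ n) (A t y) := by
        intro y
        rw [pow_succ]
        rfl
      rw [hpow, hpow, ih (A t x), hPA t ht x]
  constructor
  · -- main direction
    rintro ⟨t₀, ht₀, n₀, hn₀, hρ⟩
    set B := A t₀ with hB
    set ρ := deltaP P (B ^ n₀) with hρdef
    have hρ0 : 0 ≤ ρ := deltaP_nonneg P _
    -- key pointwise estimate
    have key : ∀ t : ℝ, 0 < t → ∀ u : ℝ, 0 ≤ u → ∀ x : X,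
        ‖A t x - A t (T u x)‖ ≤ 2 * u / t * ‖x‖ := by
      intro t ht u hu x
      have e1 : A t (T u x) = (1 / t) • ∫ s in (0:ℝ)..t, T (s + u) x := by
        rw [hA t ht (T u x)]
        congr 1
        apply intervalIntegral.integral_congr
        intro s hs
        have hs0 : 0 ≤ s := by
          rcases hs with ⟨h1, _⟩
          simpa [min_eq_left ht.le] using h1
        show T s (T u x) = T (s + u) x
        rw [hTsemi s u hs0 hu]
        rfl
      have e2 : (∫ s in (0:ℝ)..t, T (s + u) x) = ∫ s in u..(t + u), T s x := by
        have := intervalIntegral.integral_comp_add_right (a := (0:ℝ)) (b := t)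
          (fun s => T s x) u
        simpa using this
      have split1 : (∫ s in (0:ℝ)..t, T s x) =
          (∫ s in (0:ℝ)..u, T s x) + ∫ s in u..t, T s x :=
        (intervalIntegral.integral_add_adjacent_intervals
          (hInt x 0 u le_rfl hu) (hInt x u t hu ht.le)).symm
      have split2 : (∫ s in u..(t + u), T s x) =
          (∫ s in u..t, T s x) + ∫ s in t..(t + u), T s x :=
        (intervalIntegral.integral_add_adjacent_intervals
          (hInt x u t hu ht.le) (hInt x t (t + u) ht.le (by linarith))).symm
      have ediff : A t x - A t (T u x) =
          (1 / t) • ((∫ s in (0:ℝ)..u, T s x) - ∫ s in t..(t + u), T s x) := by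
        rw [hA t ht x, e1, e2, ← smul_sub]
        congr 1
        rw [split1, split2]
        abel
      rw [ediff, norm_smul]
      have h1 : ‖(1 : ℝ) / t‖ = 1 / t := by
        rw [Real.norm_eq_abs, abs_of_pos (by positivity)]
      rw [h1]
      have b1 : ‖∫ s in (0:ℝ)..u, T s x‖ ≤ ‖x‖ * u := by
        have := hIb x 0 u le_rfl hu
        simpa [abs_of_nonneg hu] using this
      have b2 : ‖∫ s in t..(t + u), T s x‖ ≤ ‖x‖ * u := by
        have := hIb x t (t + u) ht.le (by linarith)
        simpa [abs_of_nonneg hu] using this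
      calc 1 / t * ‖(∫ s in (0:ℝ)..u, T s x) - ∫ s in t..(t + u), T s x‖
          ≤ 1 / t * (‖x‖ * u + ‖x‖ * u) := by
            gcongr
            exact le_trans (norm_sub_le _ _) (add_le_add b1 b2)
      _ = 2 * u / t * ‖x‖ := by field_simp; ring
    -- intermediate: ‖A t x - A t (A t₀ x)‖ ≤ (2 t₀ / t) ‖x‖
    have key2 : ∀ t : ℝ, 0 < t → ∀ x : X,
        ‖A t x - A t (B x)‖ ≤ 2 * t₀ / t * ‖x‖ := by
      intro t ht x
      have hAcont : IntervalIntegrable (fun u => A t (T u x)) MeasureTheory.volume 0 t₀ := by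
        apply ContinuousOn.intervalIntegrable
        apply ((A t).continuous.comp_continuousOn (hTcont x)).mono
        intro y hy
        exact le_trans (le_min le_rfl ht₀.le) hy.1
      have e1 : A t (B x) = (1 / t₀) • ∫ u in (0:ℝ)..t₀, A t (T u x) := by
        rw [hB, hA t₀ ht₀ x, map_smul]
        congr 1
        exact ((A t).intervalIntegral_comp_comm (hInt x 0 t₀ le_rfl ht₀.le)).symm
      have e2 : A t x = (1 / t₀) • ∫ _u in (0:ℝ)..t₀, A t x := by
        rw [intervalIntegral.integral_const, sub_zero, smul_smul]
        rw [one_div, inv_mul_cancel₀ (ne_of_gt ht₀), one_smul]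
      have ediff : A t x - A t (B x) =
          (1 / t₀) • ∫ u in (0:ℝ)..t₀, (A t x - A t (T u x)) := by
        rw [intervalIntegral.integral_sub intervalIntegrable_const hAcont, smul_sub,
          ← e1, ← e2]
      rw [ediff, norm_smul]
      have h1 : ‖(1 : ℝ) / t₀‖ = 1 / t₀ := by
        rw [Real.norm_eq_abs, abs_of_pos (by positivity)]
      rw [h1]
      have hb : ‖∫ u in (0:ℝ)..t₀, (A t x - A t (T u x))‖ ≤ (2 * t₀ / t * ‖x‖) * |t₀ - 0| := by
        apply intervalIntegral.norm_integral_le_of_norm_le_const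
        intro u hu
        have hu1 : 0 < u := by
          rcases hu with ⟨h1, _⟩
          simpa [min_eq_left ht₀.le] using h1
        have hu2 : u ≤ t₀ := by
          rcases hu with ⟨_, h2⟩
          simpa [max_eq_right ht₀.le] using h2
        calc ‖A t x - A t (T u x)‖ ≤ 2 * u / t * ‖x‖ := key t ht u hu1.le x
        _ ≤ 2 * t₀ / t * ‖x‖ := by gcongr
      calc 1 / t₀ * ‖∫ u in (0:ℝ)..t₀, (A t x - A t (T u x))‖
          ≤ 1 / t₀ * ((2 * t₀ / t * ‖x‖) * |t₀ - 0|) := by gcongr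
      _ = 2 * t₀ / t * ‖x‖ := by
          rw [sub_zero, abs_of_pos ht₀]; field_simp
    -- operator norm bound on A t * (1 - B)
    have hop : ∀ t : ℝ, 0 < t → ‖A t * (1 - B)‖ ≤ 2 * t₀ / t := by
      intro t ht
      apply ContinuousLinearMap.opNorm_le_bound _ (by positivity)
      intro x
      have : (A t * (1 - B)) x = A t x - A t (B x) := by
        simp [ContinuousLinearMap.mul_apply, map_sub]
      rw [this]
      exact key2 t ht x
    -- norm of powers of B
    have hBpow : ∀ n : ℕ, ‖B ^ n‖ ≤ 1 := by
      intro n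
      induction n with
      | zero => rw [pow_zero]; exact ContinuousLinearMap.norm_id_le
      | succ n ih =>
        calc ‖B ^ (n + 1)‖ = ‖B ^ n * B‖ := by rw [pow_succ]
        _ ≤ ‖B ^ n‖ * ‖B‖ := norm_mul_le _ _
        _ ≤ 1 * 1 := by
            apply mul_le_mul ih _ (norm_nonneg _) zero_le_one
            exact ContinuousLinearMap.opNorm_le_bound _ zero_le_one
              (fun x => by rw [one_mul]; exact hAb t₀ ht₀ x)
        _ = 1 := one_mul 1
    -- operator norm bound on A t * (1 - B ^ n₀)
    have hopn : ∀ t : ℝ, 0 < t → ‖A t * (1 - B ^ n₀)‖ ≤ n₀ * (2 * t₀ / t) := by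
      intro t ht
      have hg : (1 : X →L[ℝ] X) - B ^ n₀ = (1 - B) * ∑ k ∈ Finset.range n₀, B ^ k :=
        (mul_neg_geom_sum B n₀).symm
      calc ‖A t * (1 - B ^ n₀)‖ = ‖(A t * (1 - B)) * ∑ k ∈ Finset.range n₀, B ^ k‖ := by
            rw [hg, mul_assoc]
      _ ≤ ‖A t * (1 - B)‖ * ‖∑ k ∈ Finset.range n₀, B ^ k‖ := norm_mul_le _ _
      _ ≤ (2 * t₀ / t) * n₀ := by
          apply mul_le_mul (hop t ht) _ (norm_nonneg _) (by positivity)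
          calc ‖∑ k ∈ Finset.range n₀, B ^ k‖ ≤ ∑ k ∈ Finset.range n₀, ‖B ^ k‖ :=
                norm_sum_le _ _
          _ ≤ ∑ _k ∈ Finset.range n₀, (1 : ℝ) := Finset.sum_le_sum fun k _ => hBpow k
          _ = n₀ := by simp
      _ = n₀ * (2 * t₀ / t) := mul_comm _ _
    -- main inequality: δ(A t) ≤ ρ δ(A t) + n₀ (2 t₀ / t)
    have main : ∀ t : ℝ, 0 < t →
        deltaP P (A t) ≤ ρ * deltaP P (A t) + n₀ * (2 * t₀ / t) := by
      intro t ht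
      have hδ0 : 0 ≤ deltaP P (A t) := deltaP_nonneg P _
      apply deltaP_le _ _ (by positivity)
      intro x hx
      have hdecomp : A t x = A t ((B ^ n₀) x) + (A t * (1 - B ^ n₀)) x := by
        simp [ContinuousLinearMap.mul_apply, map_sub]
      have hPBx : P ((B ^ n₀) x) = 0 := by
        rw [hPApow t₀ ht₀ n₀ x, hx, map_zero]
      have t1 : ‖A t ((B ^ n₀) x)‖ ≤ deltaP P (A t) * (ρ * ‖x‖) := by
        calc ‖A t ((B ^ n₀) x)‖ ≤ deltaP P (A t) * ‖(B ^ n₀) x‖ :=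
              deltaP_apply_le P (A t) _ hPBx
        _ ≤ deltaP P (A t) * (ρ * ‖x‖) := by
            gcongr
            exact deltaP_apply_le P (B ^ n₀) x hx
      have t2 : ‖(A t * (1 - B ^ n₀)) x‖ ≤ n₀ * (2 * t₀ / t) * ‖x‖ :=
        le_trans ((A t * (1 - B ^ n₀)).le_opNorm x) (by gcongr; exact hopn t ht)
      calc ‖A t x‖ ≤ ‖A t ((B ^ n₀) x)‖ + ‖(A t * (1 - B ^ n₀)) x‖ := by
            rw [hdecomp]; exact norm_add_le _ _
      _ ≤ deltaP P (A t) * (ρ * ‖x‖) + n₀ * (2 * t₀ / t) * ‖x‖ := add_le_add t1 t2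
      _ = (ρ * deltaP P (A t) + n₀ * (2 * t₀ / t)) * ‖x‖ := by ring
    -- rearrange and squeeze
    have hK : ∀ t : ℝ, 0 < t →
        deltaP P (A t) ≤ (n₀ * (2 * t₀) / (1 - ρ)) / t := by
      intro t ht
      have h1 := main t ht
      have h2 : 0 < 1 - ρ := by linarith
      rw [div_div, le_div_iff₀ (by positivity)]
      have hc : t * (↑n₀ * (2 * t₀ / t)) = ↑n₀ * (2 * t₀) := by field_simp
      nlinarith [mul_le_mul_of_nonneg_left h1 ht.le]
    apply squeeze_zero' (Filter.Eventually.of_forall fun t => deltaP_nonneg P (A t))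
    · filter_upwards [Filter.eventually_gt_atTop (0 : ℝ)] with t ht
      exact hK t ht
    · exact Filter.Tendsto.const_div_atTop Filter.tendsto_id _
  · -- converse direction
    intro h
    have h1 : ∀ᶠ t in Filter.atTop, deltaP P (A t) < 1 :=
      h.eventually_lt_const one_pos
    obtain ⟨t₀, ht₀, hlt⟩ := (h1.and (Filter.eventually_gt_atTop 0)).exists
    exact ⟨t₀, hlt, 1, le_rfl, by rwa [pow_one]⟩
end
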